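/- arXiv:1805.10658 — 2 statements merged into one kernel-verified Lean document; each statement's English description precedes it below -/
import Mathlib

section
/- Let p ≥ 2, q > 0, and let μ be a probability measure on (−∞,0] with μ^(pq) := ∫_{(−∞,0]} e^{−pqα} μ(dα) < ∞. Let X : ℝ → ℝ^d be measurable with restriction ζ = X|_{(−∞,0]} ∈ C_q((−∞,0]; ℝ^d) and |X| locally bounded on [0,∞). Then for every t ≥ 0, ∫_0^t ∫_{(−∞,0]} |X(s+α)|^p μ(dα) ds ≤ (μ^(pq)/(pq))·‖ζ‖_q^p + ∫_0^t |X(s)|^p ds. -/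
open MeasureTheory

/-!
For `u ≤ 0` the weighted sup norm gives `|X u|^p ≤ e^{-pq u} ‖ζ‖_q^p`. Split the delayed integrand
`|X (s + α)|^p` according to whether `s + α ≤ 0` (the initial segment) or `s + α ∈ (0, t]`.
On the initial segment `e^{-pq(s+α)} = e^{-pq s} e^{-pq α}`, and integrating over `α` and then
`s ∈ (0, t]` gives at most `μ^(pq) / (pq) · ‖ζ‖_q^p`. The remaining part is bounded, by Tonelli
and translation invariance of Lebesgue measure, by `μ(ℝ) ∫_0^t |X s|^p ds = ∫_0^t |X s|^p ds`.
-/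

open Set Real
open scoped ENNReal

theorem lintegral_lintegral_add_eq_measure_univ_mul {G : Type*} [MeasurableSpace G] [AddGroup G]
    [MeasurableAdd₂ G] (ν μ : Measure G) [SFinite ν] [SFinite μ] [ν.IsAddRightInvariant]
    {h : G → ℝ≥0∞} (hh : Measurable h) :
    ∫⁻ s, ∫⁻ α, h (s + α) ∂μ ∂ν = μ univ * ∫⁻ s, h s ∂ν := by
  rw [lintegral_lintegral_swap (f := fun s α => h (s + α)) (hh.comp measurable_add).aemeasurable]
  simp_rw [lintegral_add_right_eq_self h]
  rw [lintegral_const, mul_comm]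

theorem lintegral_Ioi_exp_neg_mul {r : ℝ} (hr : 0 < r) :
    ∫⁻ s in Ioi 0, ENNReal.ofReal (exp (-r * s)) = (ENNReal.ofReal r)⁻¹ := by
  have hr' : -r < 0 := neg_neg_of_pos hr
  rw [← ofReal_integral_eq_lintegral_ofReal (integrableOn_exp_mul_Ioi hr' 0)
    (ae_of_all _ fun s => (exp_pos _).le), integral_exp_mul_Ioi hr', ← ENNReal.ofReal_inv_of_pos hr]
  simp

theorem rpow_norm_le_exp_mul_iSup {E : Type*} [NormedAddCommGroup E] {X : ℝ → E} {p q : ℝ}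
    (hp : 0 ≤ p) (hbdd : BddAbove (range fun α : Iic (0:ℝ) => exp (q * α) * ‖X α‖))
    {u : ℝ} (hu : u ≤ 0) :
    ‖X u‖ ^ p ≤ exp (-(p * q) * u) * (⨆ α : Iic (0:ℝ), exp (q * α) * ‖X α‖) ^ p := by
  set M := ⨆ α : Iic (0:ℝ), exp (q * α) * ‖X α‖
  have hweighted : exp (q * u) * ‖X u‖ ≤ M := le_ciSup hbdd ⟨u, hu⟩
  have hM : 0 ≤ M := (by positivity : 0 ≤ exp (q * u) * ‖X u‖).trans hweighted
  have hnorm : ‖X u‖ ≤ exp (-(q * u)) * M := by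
    rw [exp_neg, inv_mul_eq_div, le_div_iff₀ (exp_pos _)]
    linarith
  calc ‖X u‖ ^ p ≤ (exp (-(q * u)) * M) ^ p := rpow_le_rpow (norm_nonneg _) hnorm hp
    _ = exp (-(p * q) * u) * M ^ p := by
      rw [mul_rpow (exp_pos _).le hM, ← exp_mul]
      ring_nf

theorem setLIntegral_lintegral_add_le {μ : Measure ℝ} [IsProbabilityMeasure μ]
    (hμ : ∀ᵐ α ∂μ, α ≤ 0) {g : ℝ → ℝ≥0∞} (hg : Measurable g) {r : ℝ} (hr : 0 < r)
    {C : ℝ≥0∞} (hpast : ∀ u ≤ 0, g u ≤ ENNReal.ofReal (exp (-r * u)) * C) (t : ℝ) :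
    ∫⁻ s in Ioc 0 t, ∫⁻ α, g (s + α) ∂μ ≤
      (∫⁻ α, ENNReal.ofReal (exp (-r * α)) ∂μ) / ENNReal.ofReal r * C +
        ∫⁻ s in Ioc 0 t, g s := by
  set e : ℝ → ℝ≥0∞ := fun u => ENNReal.ofReal (exp (-r * u))
  have he : Measurable e :=
    (measurable_exp.comp (measurable_id.const_mul (-r))).ennreal_ofReal
  set h := (Ioc 0 t).indicator g
  have hh : Measurable h := hg.indicator measurableSet_Ioc
  have hshift : Measurable fun s => ∫⁻ α, h (s + α) ∂μ :=
    (hh.comp measurable_add).lintegral_prod_right'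
  have hsplit : ∀ s ∈ Ioc 0 t, ∀ α ≤ 0, g (s + α) ≤ e s * (e α * C) + h (s + α) := by
    intro s hs α hα
    rcases le_or_gt (s + α) 0 with hpast' | hpresent
    · calc g (s + α) ≤ e (s + α) * C := hpast _ hpast'
        _ = e s * (e α * C) := by
          simp only [e, mul_add, exp_add, ENNReal.ofReal_mul (exp_pos _).le, mul_assoc]
        _ ≤ _ := le_self_add
    · have : s + α ∈ Ioc 0 t := ⟨hpresent, by linarith [hs.2]⟩
      simp [h, this]
  have hinner : ∀ s ∈ Ioc 0 t,
      ∫⁻ α, g (s + α) ∂μ ≤ e s * ((∫⁻ α, e α ∂μ) * C) + ∫⁻ α, h (s + α) ∂μ := by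
    intro s hs
    calc ∫⁻ α, g (s + α) ∂μ ≤ ∫⁻ α, (e s * (e α * C) + h (s + α)) ∂μ :=
          lintegral_mono_ae (hμ.mono (hsplit s hs))
      _ = _ := by
        rw [lintegral_add_right _ (show Measurable fun α => h (s + α) from hh.comp (measurable_const_add s)),
          lintegral_const_mul _ (he.mul_const C), lintegral_mul_const _ he]
  calc ∫⁻ s in Ioc 0 t, ∫⁻ α, g (s + α) ∂μ
      ≤ ∫⁻ s in Ioc 0 t, (e s * ((∫⁻ α, e α ∂μ) * C) + ∫⁻ α, h (s + α) ∂μ) :=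
        setLIntegral_mono ((he.mul_const _).add hshift) hinner
    _ = (∫⁻ s in Ioc 0 t, e s) * ((∫⁻ α, e α ∂μ) * C) +
          ∫⁻ s in Ioc 0 t, ∫⁻ α, h (s + α) ∂μ := by
        rw [lintegral_add_right _ hshift, lintegral_mul_const _ he]
    _ ≤ (∫⁻ s in Ioi 0, e s) * ((∫⁻ α, e α ∂μ) * C) + ∫⁻ s, ∫⁻ α, h (s + α) ∂μ := by
        gcongr
        · exact Ioc_subset_Ioi_self
        · exact Measure.restrict_le_self
    _ = _ := by
        rw [lintegral_Ioi_exp_neg_mul hr, lintegral_lintegral_add_eq_measure_univ_mul _ _ hh,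
          measure_univ, one_mul, lintegral_indicator measurableSet_Ioc, div_eq_mul_inv]
        ring

theorem stmt_8_general {d : ℕ} (p q : ℝ) (hp : 2 ≤ p) (hq : 0 < q)
    (μ : Measure ℝ) [IsProbabilityMeasure μ] (hsupp : μ (Set.Ioi 0) = 0)
    (X : ℝ → EuclideanSpace ℝ (Fin d)) (hX : Measurable X)
    (hζbdd : BddAbove (Set.range fun α : Set.Iic (0:ℝ) => Real.exp (q * α) * ‖X α‖))
    (t : ℝ) :
    ∫⁻ s in Set.Ioc 0 t, ∫⁻ α, ENNReal.ofReal (‖X (s + α)‖ ^ p) ∂μ ≤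
      (∫⁻ α, ENNReal.ofReal (Real.exp (-(p * q) * α)) ∂μ) / ENNReal.ofReal (p * q) *
          ENNReal.ofReal ((⨆ α : Set.Iic (0:ℝ), Real.exp (q * α) * ‖X α‖) ^ p) +
        ∫⁻ s in Set.Ioc 0 t, ENNReal.ofReal (‖X s‖ ^ p) := by
  have hp0 : 0 ≤ p := by linarith
  have hμ : ∀ᵐ α ∂μ, α ≤ 0 := by
    rw [ae_iff]
    simpa [not_le, Ioi] using hsupp
  refine setLIntegral_lintegral_add_le hμ (hX.norm.pow_const p).ennreal_ofReal
    (by positivity) (fun u hu => ?_) t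
  rw [← ENNReal.ofReal_mul (exp_pos _).le]
  exact ENNReal.ofReal_le_ofReal (rpow_norm_le_exp_mul_iSup hp0 hζbdd hu)

theorem stmt_8 {d : ℕ} (p q : ℝ) (hp : 2 ≤ p) (hq : 0 < q)
    (μ : Measure ℝ) [IsProbabilityMeasure μ] (hsupp : μ (Set.Ioi 0) = 0)
    (hμpq : ∫⁻ α, ENNReal.ofReal (Real.exp (-(p * q) * α)) ∂μ < ⊤)
    (X : ℝ → EuclideanSpace ℝ (Fin d)) (hX : Measurable X)
    (hζbdd : BddAbove (Set.range fun α : Set.Iic (0:ℝ) => Real.exp (q * α) * ‖X α‖))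
    (hloc : ∀ T > (0:ℝ), ∃ M : ℝ, ∀ s ∈ Set.Icc 0 T, ‖X s‖ ≤ M)
    (t : ℝ) (ht : 0 ≤ t) :
    ∫⁻ s in Set.Ioc 0 t, ∫⁻ α, ENNReal.ofReal (‖X (s + α)‖ ^ p) ∂μ ≤
      (∫⁻ α, ENNReal.ofReal (Real.exp (-(p * q) * α)) ∂μ) / ENNReal.ofReal (p * q) *
          ENNReal.ofReal ((⨆ α : Set.Iic (0:ℝ), Real.exp (q * α) * ‖X α‖) ^ p) +
        ∫⁻ s in Set.Ioc 0 t, ENNReal.ofReal (‖X s‖ ^ p) :=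
  stmt_8_general p q hp hq μ hsupp X hX hζbdd t
end

section
/- Let p ≥ 2, q > 0, 0 < λ < p·q, and let μ be a probability measure on (−∞,0] with μ^(pq) := ∫_{(−∞,0]} e^{−pqα} μ(dα) < ∞. Let X : ℝ → ℝ^d be measurable with ζ = X|_{(−∞,0]} ∈ C_q((−∞,0]; ℝ^d) and |X| locally bounded on [0,∞). Then for every t ≥ 0, ∫_0^t ∫_{(−∞,0]} e^{λs}|X(s+α)|^p μ(dα) ds ≤ (μ^(pq)/(pq−λ))·‖ζ‖_q^p + μ^(pq)·∫_0^t e^{λs}|X(s)|^p ds. -/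
/-! For `α ≤ 0` split according to the sign of `s + α`. If `s + α ≤ 0`, the history bound
`‖X u‖ ≤ e^{-qu} ‖ζ‖_q` gives `e^{λs} ‖X (s+α)‖^p ≤ e^{-pqα} e^{-(pq-λ)s} ‖ζ‖_q^p`, and
`∫_0^∞ e^{-(pq-λ)s} ds = 1/(pq-λ)`. If `s + α > 0`, then `λ ≤ pq` gives
`e^{λs} ≤ e^{-pqα} e^{λ(s+α)}`, and after Fubini the shift `s ↦ s + α` maps
`(0,t] ∩ {s + α > 0}` into `(0,t]`. Integrating `e^{-pqα}` in `α` gives the factor `μ^(pq)`. -/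

open MeasureTheory Set Real Function
open scoped ENNReal

section ExpWeightedSupNorm

variable {E : Type*} [NormedAddCommGroup E] {p q lam : ℝ} {X : ℝ → E}

/-- The norm `‖ζ‖_q` of `ζ = X|_{(-∞, 0]}` in `C_q`. -/
noncomputable def expWeightedSupNorm (q : ℝ) (X : ℝ → E) : ℝ :=
  ⨆ α : Iic (0 : ℝ), exp (q * α) * ‖X α‖

lemma expWeightedSupNorm_nonneg : 0 ≤ expWeightedSupNorm q X :=
  Real.iSup_nonneg fun _ => by positivity

lemma norm_le_exp_mul_expWeightedSupNorm
    (hX : BddAbove (range fun α : Iic (0 : ℝ) => exp (q * α) * ‖X α‖)) {u : ℝ} (hu : u ≤ 0) :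
    ‖X u‖ ≤ exp (-(q * u)) * expWeightedSupNorm q X := by
  rw [exp_neg, ← div_eq_inv_mul, le_div_iff₀' (exp_pos _)]
  exact le_ciSup hX ⟨u, hu⟩

lemma exp_mul_norm_rpow_le_of_add_nonpos (hp : 0 ≤ p)
    (hX : BddAbove (range fun α : Iic (0 : ℝ) => exp (q * α) * ‖X α‖)) {s α : ℝ} (h : s + α ≤ 0) :
    exp (lam * s) * ‖X (s + α)‖ ^ p ≤
      exp (-(p * q) * α) * (exp (-(p * q - lam) * s) * expWeightedSupNorm q X ^ p) := calc
  _ ≤ exp (lam * s) * (exp (-(q * (s + α))) * expWeightedSupNorm q X) ^ p := by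
    gcongr
    exact norm_le_exp_mul_expWeightedSupNorm hX h
  _ = _ := by
    rw [mul_rpow (exp_pos _).le expWeightedSupNorm_nonneg, ← exp_mul, ← mul_assoc, ← mul_assoc,
      ← exp_add, ← exp_add]
    ring_nf

lemma exp_mul_le_exp_mul_exp_mul_add (hlam : lam ≤ p * q) (s : ℝ) {α : ℝ} (hα : α ≤ 0) :
    exp (lam * s) ≤ exp (-(p * q) * α) * exp (lam * (s + α)) := by
  rw [← exp_add]
  exact exp_le_exp.2 (by nlinarith)

lemma ofReal_exp_mul_norm_rpow_le (hp : 0 ≤ p) (hlam : lam ≤ p * q)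
    (hX : BddAbove (range fun α : Iic (0 : ℝ) => exp (q * α) * ‖X α‖)) (s : ℝ) {α : ℝ}
    (hα : α ≤ 0) :
    ENNReal.ofReal (exp (lam * s) * ‖X (s + α)‖ ^ p) ≤
      ENNReal.ofReal (exp (-(p * q) * α)) *
        (ENNReal.ofReal (exp (-(p * q - lam) * s)) * ENNReal.ofReal (expWeightedSupNorm q X ^ p) +
          (Ioi 0).indicator (fun u => ENNReal.ofReal (exp (lam * u) * ‖X u‖ ^ p)) (s + α)) := by
  rcases le_or_gt (s + α) 0 with h | h
  · rw [indicator_of_notMem (show s + α ∉ Ioi 0 from not_lt.2 h), add_zero,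
      ← ENNReal.ofReal_mul (exp_pos _).le, ← ENNReal.ofReal_mul (exp_pos _).le]
    exact ENNReal.ofReal_le_ofReal (exp_mul_norm_rpow_le_of_add_nonpos hp hX h)
  · rw [indicator_of_mem (show s + α ∈ Ioi 0 from h)]
    refine le_trans ?_ (mul_le_mul_right le_add_self _)
    rw [← ENNReal.ofReal_mul (exp_pos _).le, ← mul_assoc]
    gcongr
    exact exp_mul_le_exp_mul_exp_mul_add hlam s hα

end ExpWeightedSupNorm

lemma setLIntegral_Ioc_exp_neg_mul_le {c : ℝ} (hc : 0 < c) (t : ℝ) :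
    ∫⁻ s in Ioc 0 t, ENNReal.ofReal (exp (-c * s)) ≤ ENNReal.ofReal c⁻¹ := calc
  _ ≤ ∫⁻ s in Ioi 0, ENNReal.ofReal (exp (-c * s)) := lintegral_mono_set Ioc_subset_Ioi_self
  _ = ENNReal.ofReal (∫ s in Ioi 0, exp (-c * s)) :=
    (ofReal_integral_eq_lintegral_ofReal (exp_neg_integrableOn_Ioi 0 hc)
      (ae_of_all _ fun _ => (exp_pos _).le)).symm
  _ = ENNReal.ofReal c⁻¹ := by
    rw [integral_exp_mul_Ioi (neg_lt_zero.2 hc), mul_zero, exp_zero, div_neg, neg_div, neg_neg,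
      one_div]

lemma setLIntegral_Ioc_indicator_Ioi_comp_add_le (g : ℝ → ℝ≥0∞) {α : ℝ} (hα : α ≤ 0) (t : ℝ) :
    ∫⁻ s in Ioc 0 t, (Ioi 0).indicator g (s + α) ≤ ∫⁻ s in Ioc 0 t, g s := calc
  _ = ∫⁻ s, (Ioc 0 t).indicator (fun s => (Ioi 0).indicator g (s + α)) s :=
    (lintegral_indicator measurableSet_Ioc _).symm
  _ ≤ ∫⁻ s, (Ioc 0 t).indicator g (s + α) := lintegral_mono fun s => by
    by_cases hs : s ∈ Ioc 0 t
    · by_cases hsα : s + α ∈ Ioi 0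
      · rw [indicator_of_mem hs, indicator_of_mem hsα,
          indicator_of_mem (show s + α ∈ Ioc 0 t from ⟨hsα, by linarith [hs.2]⟩)]
      · simp [indicator_of_mem hs, indicator_of_notMem hsα]
    · simp [indicator_of_notMem hs]
  _ = ∫⁻ s, (Ioc 0 t).indicator g s := lintegral_add_right_eq_self _ α
  _ = ∫⁻ s in Ioc 0 t, g s := lintegral_indicator measurableSet_Ioc _

lemma lintegral_lintegral_mul_add_eq {S A : Type*} [MeasurableSpace S] [MeasurableSpace A]
    {ν : Measure S} {μ : Measure A} [SFinite ν] [SFinite μ] {w : A → ℝ≥0∞} {f : S → ℝ≥0∞}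
    {g : S → A → ℝ≥0∞} (hw : Measurable w) (hf : Measurable f) (hg : Measurable (uncurry g)) :
    ∫⁻ s, ∫⁻ a, w a * (f s + g s a) ∂μ ∂ν =
      (∫⁻ s, f s ∂ν) * ∫⁻ a, w a ∂μ + ∫⁻ a, w a * ∫⁻ s, g s a ∂ν ∂μ := by
  simp_rw [mul_add, lintegral_add_left (hw.mul_const _), lintegral_mul_const _ hw]
  rw [lintegral_add_left (hf.const_mul _), lintegral_const_mul _ hf, mul_comm,
    lintegral_lintegral_swap ((hw.comp measurable_snd).mul hg).aemeasurable]
  simp_rw [lintegral_const_mul _ hg.of_uncurry_right]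

theorem stmt_9_general {d : ℕ} (p q lam : ℝ) (hp : 2 ≤ p)
    (hlampq : lam < p * q)
    (μ : Measure ℝ) [IsProbabilityMeasure μ] (hsupp : μ (Set.Ioi 0) = 0)
    (X : ℝ → EuclideanSpace ℝ (Fin d)) (hX : Measurable X)
    (hζbdd : BddAbove (Set.range fun α : Set.Iic (0:ℝ) => Real.exp (q * α) * ‖X α‖))
    (t : ℝ) :
    ∫⁻ s in Set.Ioc 0 t, ∫⁻ α, ENNReal.ofReal (Real.exp (lam * s) * ‖X (s + α)‖ ^ p) ∂μ ≤
      (∫⁻ α, ENNReal.ofReal (Real.exp (-(p * q) * α)) ∂μ) / ENNReal.ofReal (p * q - lam) *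
          ENNReal.ofReal ((⨆ α : Set.Iic (0:ℝ), Real.exp (q * α) * ‖X α‖) ^ p) +
        (∫⁻ α, ENNReal.ofReal (Real.exp (-(p * q) * α)) ∂μ) *
          ∫⁻ s in Set.Ioc 0 t, ENNReal.ofReal (Real.exp (lam * s) * ‖X s‖ ^ p) := by
  set g : ℝ → ℝ≥0∞ := fun u => ENNReal.ofReal (exp (lam * u) * ‖X u‖ ^ p)
  have hg : Measurable g := by fun_prop
  have hμ : ∀ᵐ α ∂μ, α ≤ 0 := by
    rw [ae_iff]
    simp only [not_le]
    exact hsupp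
  change _ ≤ _ / _ * ENNReal.ofReal (expWeightedSupNorm q X ^ p) + _
  calc _ ≤ ∫⁻ s in Ioc 0 t, ∫⁻ α, ENNReal.ofReal (exp (-(p * q) * α)) *
          (ENNReal.ofReal (exp (-(p * q - lam) * s)) * ENNReal.ofReal (expWeightedSupNorm q X ^ p) +
            (Ioi 0).indicator g (s + α)) ∂μ :=
        lintegral_mono fun s => lintegral_mono_ae <| hμ.mono fun α hα =>
          ofReal_exp_mul_norm_rpow_le (by linarith) hlampq.le hζbdd s hα
    _ = (∫⁻ s in Ioc 0 t, ENNReal.ofReal (exp (-(p * q - lam) * s)) *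
            ENNReal.ofReal (expWeightedSupNorm q X ^ p)) *
          ∫⁻ α, ENNReal.ofReal (exp (-(p * q) * α)) ∂μ +
        ∫⁻ α, ENNReal.ofReal (exp (-(p * q) * α)) *
          (∫⁻ s in Ioc 0 t, (Ioi 0).indicator g (s + α)) ∂μ := by
        refine lintegral_lintegral_mul_add_eq (by fun_prop) (by fun_prop) ?_
        exact (hg.indicator measurableSet_Ioi).comp measurable_add
    _ ≤ ENNReal.ofReal (p * q - lam)⁻¹ * ENNReal.ofReal (expWeightedSupNorm q X ^ p) *
          ∫⁻ α, ENNReal.ofReal (exp (-(p * q) * α)) ∂μ +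
        ∫⁻ α, ENNReal.ofReal (exp (-(p * q) * α)) * (∫⁻ s in Ioc 0 t, g s) ∂μ := by
      gcongr ?_ * _ + ?_
      · rw [lintegral_mul_const _ (by fun_prop)]
        exact mul_le_mul_left (setLIntegral_Ioc_exp_neg_mul_le (by linarith) t) _
      · exact lintegral_mono_ae <| hμ.mono fun α hα =>
          mul_le_mul_right (setLIntegral_Ioc_indicator_Ioi_comp_add_le g hα t) _
    _ = _ := by
      rw [lintegral_mul_const _ (by fun_prop), ENNReal.ofReal_inv_of_pos (by linarith),
        ENNReal.div_eq_inv_mul]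
      ring

theorem stmt_9 {d : ℕ} (p q lam : ℝ) (hp : 2 ≤ p) (hq : 0 < q)
    (hlam : 0 < lam) (hlampq : lam < p * q)
    (μ : Measure ℝ) [IsProbabilityMeasure μ] (hsupp : μ (Set.Ioi 0) = 0)
    (hμpq : ∫⁻ α, ENNReal.ofReal (Real.exp (-(p * q) * α)) ∂μ < ⊤)
    (X : ℝ → EuclideanSpace ℝ (Fin d)) (hX : Measurable X)
    (hζbdd : BddAbove (Set.range fun α : Set.Iic (0:ℝ) => Real.exp (q * α) * ‖X α‖))
    (hloc : ∀ T > (0:ℝ), ∃ M : ℝ, ∀ s ∈ Set.Icc 0 T, ‖X s‖ ≤ M)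
    (t : ℝ) (ht : 0 ≤ t) :
    ∫⁻ s in Set.Ioc 0 t, ∫⁻ α, ENNReal.ofReal (Real.exp (lam * s) * ‖X (s + α)‖ ^ p) ∂μ ≤
      (∫⁻ α, ENNReal.ofReal (Real.exp (-(p * q) * α)) ∂μ) / ENNReal.ofReal (p * q - lam) *
          ENNReal.ofReal ((⨆ α : Set.Iic (0:ℝ), Real.exp (q * α) * ‖X α‖) ^ p) +
        (∫⁻ α, ENNReal.ofReal (Real.exp (-(p * q) * α)) ∂μ) *
          ∫⁻ s in Set.Ioc 0 t, ENNReal.ofReal (Real.exp (lam * s) * ‖X s‖ ^ p) :=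
  stmt_9_general p q lam hp hlampq μ hsupp X hX hζbdd t
end
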